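/- Let C ∈ ℝ^{p×p} be symmetric positive definite with block decomposition C = [[C11, C12],[C21, C22]], C11 of size p0×p0. Let W ∈ ℝ^p with first p0 coordinates W^{(1)}, λ > 0, γ_j > 0, and s_j ∈ {-1,+1} for j ≤ p0. Suppose u^{(1)} = C11^{-1}[W^{(1)} - (λ/(2√n)) (s_1 γ_1, ..., s_{p0} γ_{p0})'] and suppose that for each j ≤ p0, sgn(β̂_j + u^{(1)}_j/√n) = s_j with β̂_j ≠ -u^{(1)}_j/√n, and for each j > p0, |(C21 u^{(1)})_j - W_j| ≤ (λ/(2√n)) γ_j. Then u = (u^{(1)'}, 0')' minimizes v ↦ v'Cv - 2v'W + λ Σ_{j=1}^p γ_j (|β̂_j + v_j/√n| - |β̂_j|), where β̂_j = 0 for j > p0. -/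

import Mathlib

open Matrix Finset

/-!
Write `f v = vᵀCv - 2vᵀW + ∑ⱼ φⱼ(vⱼ)`. Expanding around `u` gives
`f v - f u = (v-u)ᵀC(v-u) + ∑ⱼ [2(vⱼ-uⱼ)((Cu)ⱼ-Wⱼ) + φⱼ(vⱼ) - φⱼ(uⱼ)]`, and the quadratic term is
nonnegative, so it suffices that `u` is optimal coordinate by coordinate for the linearised problem.
On the first `p0` coordinates this is the subgradient inequality `sign y · (x - y) ≤ |x| - |y|`,
since the equation defining `u⁽¹⁾` says `2((Cu)ⱼ - Wⱼ) = -(λγⱼ/√n) sⱼ`; on the others `uⱼ = β̂ⱼ = 0` and the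
gradient is dominated by the slope `λγⱼ/(2√n)` of the penalty.
-/

theorem quadratic_add_separable_le_of_coord_opt {ι : Type*} [Fintype ι]
    {C : Matrix ι ι ℝ} (hC : C.PosSemidef) {W u : ι → ℝ} {φ : ι → ℝ → ℝ}
    (hopt : ∀ j x, 0 ≤ 2 * (x - u j) * ((C *ᵥ u) j - W j) + (φ j x - φ j (u j)))
    (v : ι → ℝ) :
    u ⬝ᵥ C *ᵥ u - 2 * (u ⬝ᵥ W) + ∑ j, φ j (u j)
      ≤ v ⬝ᵥ C *ᵥ v - 2 * (v ⬝ᵥ W) + ∑ j, φ j (v j) := by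
  have hquad : 0 ≤ (v - u) ⬝ᵥ C *ᵥ (v - u) := by
    simpa using hC.dotProduct_mulVec_nonneg (v - u)
  have hsymm : u ⬝ᵥ C *ᵥ v = v ⬝ᵥ C *ᵥ u := by
    rw [dotProduct_mulVec, dotProduct_comm, ← mulVec_transpose,
      (isHermitian_iff_isSymm.mp hC.1).eq]
  have hcoord : 0 ≤ ∑ j, (2 * (v j - u j) * ((C *ᵥ u) j - W j) + (φ j (v j) - φ j (u j))) :=
    sum_nonneg fun j _ => hopt j (v j)
  have hlin : ∑ j, 2 * (v j - u j) * ((C *ᵥ u) j - W j)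
      = 2 * (v ⬝ᵥ C *ᵥ u - u ⬝ᵥ C *ᵥ u - v ⬝ᵥ W + u ⬝ᵥ W) := by
    simp only [dotProduct, mul_sum, ← sum_sub_distrib, ← sum_add_distrib]
    exact sum_congr rfl fun j _ => by ring
  rw [sum_add_distrib, hlin, sum_sub_distrib] at hcoord
  simp only [mulVec_sub, dotProduct_sub, sub_dotProduct, hsymm] at hquad
  linarith

theorem Real.sign_mul_sub_le_abs_sub_abs (x y : ℝ) : Real.sign y * (x - y) ≤ |x| - |y| := by
  rcases lt_trichotomy y 0 with hy | rfl | hy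
  · rw [Real.sign_of_neg hy, abs_of_neg hy]; linarith [neg_abs_le x]
  · simp
  · rw [Real.sign_of_pos hy, abs_of_pos hy]; linarith [le_abs_self x]

theorem lasso_coord_opt_of_sign {w r b u g : ℝ} (hw : 0 ≤ w)
    (hg : g = -(w / (2 * r) * Real.sign (b + u / r))) (x : ℝ) :
    0 ≤ 2 * (x - u) * g + w * (|b + x / r| - |b + u / r|) := by
  have hsub := Real.sign_mul_sub_le_abs_sub_abs (b + x / r) (b + u / r)
  have hgrad : 2 * (x - u) * g = -(w * (Real.sign (b + u / r) * ((b + x / r) - (b + u / r)))) := by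
    rw [hg]; ring
  rw [hgrad]
  linarith [mul_le_mul_of_nonneg_left hsub hw]

theorem lasso_coord_opt_of_abs_le {w r g : ℝ} (hr : 0 ≤ r) (hg : |g| ≤ w / (2 * r)) (x : ℝ) :
    0 ≤ 2 * x * g + w * |x / r| := by
  have : |2 * x * g| ≤ w * |x / r| := calc
    |2 * x * g| = 2 * |x| * |g| := by rw [abs_mul, abs_mul, abs_two]
    _ ≤ 2 * |x| * (w / (2 * r)) := by gcongr
    _ = w * |x / r| := by rw [abs_div, abs_of_nonneg hr]; ring
  linarith [neg_abs_le (2 * x * g)]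

theorem Matrix.mulVec_sum_elim_zero {R l m n o : Type*} [Fintype l] [Fintype m]
    [NonUnitalNonAssocSemiring R] (M : Matrix (n ⊕ o) (l ⊕ m) R) (x : l → R) :
    M *ᵥ Sum.elim x (fun _ => 0) = Sum.elim (M.toBlocks₁₁ *ᵥ x) (M.toBlocks₂₁ *ᵥ x) := by
  rw [← fromBlocks_toBlocks M, fromBlocks_mulVec]
  simp [← Pi.zero_def]

theorem stmt11_general (p0 p1 n : ℕ)
    (C : Matrix (Fin p0 ⊕ Fin p1) (Fin p0 ⊕ Fin p1) ℝ) (hC : C.PosDef)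
    (W : Fin p0 ⊕ Fin p1 → ℝ) (lam : ℝ) (hlam : 0 < lam)
    (γ : Fin p0 ⊕ Fin p1 → ℝ) (hγ : ∀ j, 0 < γ j)
    (s : Fin p0 → ℝ)
    (βhat : Fin p0 ⊕ Fin p1 → ℝ) (hβ0 : ∀ j, βhat (Sum.inr j) = 0)
    (C11 : Matrix (Fin p0) (Fin p0) ℝ)
    (hC11 : ∀ i j, C11 i j = C (Sum.inl i) (Sum.inl j))
    (C21 : Matrix (Fin p1) (Fin p0) ℝ)
    (hC21 : ∀ i j, C21 i j = C (Sum.inr i) (Sum.inl j))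
    (u1 : Fin p0 → ℝ)
    (hu1 : u1 = C11⁻¹.mulVec
      (fun j => W (Sum.inl j) - lam / (2 * Real.sqrt n) * (s j * γ (Sum.inl j))))
    (hsgn : ∀ j, Real.sign (βhat (Sum.inl j) + u1 j / Real.sqrt n) = s j)
    (hinact : ∀ j, |C21.mulVec u1 j - W (Sum.inr j)|
      ≤ lam / (2 * Real.sqrt n) * γ (Sum.inr j))
    (f : (Fin p0 ⊕ Fin p1 → ℝ) → ℝ)
    (hf : ∀ v, f v = v ⬝ᵥ C.mulVec v - 2 * (v ⬝ᵥ W)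
        + lam * ∑ j, γ j * (|βhat j + v j / Real.sqrt n| - |βhat j|)) :
    ∀ v, f (Sum.elim u1 fun _ => 0) ≤ f v := by
  intro v
  set r := Real.sqrt n
  have hC11pd : C11.PosDef := by
    rw [show C11 = C.submatrix Sum.inl Sum.inl from Matrix.ext hC11]
    exact hC.submatrix Sum.inl_injective
  have hC11u1 : C11 *ᵥ u1 = fun j => W (Sum.inl j) - lam / (2 * r) * (s j * γ (Sum.inl j)) := by
    rw [hu1, mulVec_mulVec, mul_nonsing_inv _ ((isUnit_iff_isUnit_det _).mp hC11pd.isUnit),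
      one_mulVec]
  have hCu : C *ᵥ Sum.elim u1 (fun _ => 0) = Sum.elim (C11 *ᵥ u1) (C21 *ᵥ u1) := by
    rw [mulVec_sum_elim_zero, show C.toBlocks₁₁ = C11 from Matrix.ext fun i j => (hC11 i j).symm,
      show C.toBlocks₂₁ = C21 from Matrix.ext fun i j => (hC21 i j).symm]
  have hpenalty : ∀ v : Fin p0 ⊕ Fin p1 → ℝ, lam * ∑ j, γ j * (|βhat j + v j / r| - |βhat j|)
      = ∑ j, lam * γ j * (|βhat j + v j / r| - |βhat j|) := fun v => by
    simp only [mul_sum, mul_assoc]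
  rw [hf, hf, hpenalty, hpenalty]
  refine quadratic_add_separable_le_of_coord_opt
    (φ := fun j x => lam * γ j * (|βhat j + x / r| - |βhat j|)) hC.posSemidef (fun j x => ?_) v
  have hw := mul_nonneg hlam.le (hγ j).le
  rcases j with j | j
  · have hgrad : (C *ᵥ Sum.elim u1 fun _ => 0) (.inl j) - W (.inl j)
        = -(lam * γ (.inl j) / (2 * r) * Real.sign (βhat (.inl j) + u1 j / r)) := by
      rw [hCu, Sum.elim_inl, hC11u1, hsgn]; ring
    have hopt := lasso_coord_opt_of_sign hw hgrad x
    simp only [Sum.elim_inl]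
    linarith
  · have hopt := lasso_coord_opt_of_abs_le (w := lam * γ (.inr j)) (Real.sqrt_nonneg n)
      ((hinact j).trans_eq (by ring)) x
    rw [hCu]
    simp only [Sum.elim_inr, hβ0, zero_div, zero_add, abs_zero, sub_zero]
    linarith

theorem stmt11 (p0 p1 n : ℕ) (hn : 1 ≤ n)
    (C : Matrix (Fin p0 ⊕ Fin p1) (Fin p0 ⊕ Fin p1) ℝ) (hC : C.PosDef)
    (W : Fin p0 ⊕ Fin p1 → ℝ) (lam : ℝ) (hlam : 0 < lam)
    (γ : Fin p0 ⊕ Fin p1 → ℝ) (hγ : ∀ j, 0 < γ j)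
    (s : Fin p0 → ℝ) (hs : ∀ j, s j = 1 ∨ s j = -1)
    (βhat : Fin p0 ⊕ Fin p1 → ℝ) (hβ0 : ∀ j, βhat (Sum.inr j) = 0)
    (C11 : Matrix (Fin p0) (Fin p0) ℝ)
    (hC11 : ∀ i j, C11 i j = C (Sum.inl i) (Sum.inl j))
    (C21 : Matrix (Fin p1) (Fin p0) ℝ)
    (hC21 : ∀ i j, C21 i j = C (Sum.inr i) (Sum.inl j))
    (u1 : Fin p0 → ℝ)
    (hu1 : u1 = C11⁻¹.mulVec
      (fun j => W (Sum.inl j) - lam / (2 * Real.sqrt n) * (s j * γ (Sum.inl j))))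
    (hsgn : ∀ j, Real.sign (βhat (Sum.inl j) + u1 j / Real.sqrt n) = s j)
    (hne : ∀ j, βhat (Sum.inl j) ≠ -(u1 j / Real.sqrt n))
    (hinact : ∀ j, |C21.mulVec u1 j - W (Sum.inr j)|
      ≤ lam / (2 * Real.sqrt n) * γ (Sum.inr j))
    (f : (Fin p0 ⊕ Fin p1 → ℝ) → ℝ)
    (hf : ∀ v, f v = v ⬝ᵥ C.mulVec v - 2 * (v ⬝ᵥ W)
        + lam * ∑ j, γ j * (|βhat j + v j / Real.sqrt n| - |βhat j|)) :
    ∀ v, f (Sum.elim u1 fun _ => 0) ≤ f v :=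
  stmt11_general p0 p1 n C hC W lam hlam γ hγ s βhat hβ0 C11 hC11 C21 hC21 u1 hu1 hsgn hinact f hf
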